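/- Let n ≥ 1 be an integer and let a be a real number with 0 < a < 1. There is a constant C = C(a, n) such that for all j ≥ 1 and all r_l with 0 < 2^j r_l ≤ 2^{−100}, one has 2^j r_l · ∫_{r_l}^{2^{−j} − r_l} 2^{nj} r^{n−1} (1 − 2^j r)^{a−2} dr ≤ C (2^j r_l)^{a}. -/

import Mathlib

/-!
Since `2^{nj} r^{n-1} ≤ 2^j` for `r ≤ 2^{-j}`, the integral is at most
`∫ 2^j (1 - 2^j r)^{a-2} dr`, which the substitution `x = 1 - 2^j r` turns into
`∫_{t}^{1-t} x^{a-2} dx ≤ t^{a-1} / (1 - a)` with `t = 2^j r_l`.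
Multiplying by `t` gives the bound with `C = (1 - a)⁻¹`.
-/

open Real intervalIntegral

lemma integral_rpow_le_of_lt_neg_one {t s p : ℝ} (ht : 0 < t) (hts : t ≤ s) (hp : p < -1) :
    ∫ x in t..s, x ^ p ≤ t ^ (p + 1) / -(p + 1) := by
  have hzero : (0 : ℝ) ∉ Set.uIcc t s := by
    rw [Set.uIcc_of_le hts]; exact fun h => ht.not_ge h.1
  rw [integral_rpow (Or.inr ⟨by linarith, hzero⟩), ← neg_div_neg_eq, neg_sub]
  have : 0 ≤ s ^ (p + 1) := rpow_nonneg (ht.le.trans hts) _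
  gcongr <;> linarith

lemma integral_mul_one_sub_mul_rpow {c : ℝ} (hc : c ≠ 0) (ρ p : ℝ) :
    ∫ r in ρ..(c⁻¹ - ρ), c * (1 - c * r) ^ p = ∫ x in c * ρ..1 - c * ρ, x ^ p := by
  rw [integral_const_mul, integral_comp_sub_mul (fun x => x ^ p) hc, smul_eq_mul,
    ← mul_assoc, mul_inv_cancel₀ hc, one_mul, mul_sub, mul_inv_cancel₀ hc, sub_sub_cancel]

lemma pow_mul_pow_pred_le {c r : ℝ} (n : ℕ) (hc : 1 ≤ c) (hr : 0 ≤ r) (hcr : c * r ≤ 1) :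
    c ^ n * r ^ (n - 1) ≤ c := by
  cases n with
  | zero => simpa using hc
  | succ k =>
    calc c ^ (k + 1) * r ^ k = c * (c * r) ^ k := by ring
      _ ≤ c * 1 := by gcongr; exact pow_le_one₀ (by positivity) hcr
      _ = c := mul_one c

lemma integral_pow_mul_one_sub_mul_rpow_le {c ρ p : ℝ} (n : ℕ) (hc : 1 ≤ c) (hρ : 0 < ρ)
    (hcρ : c * ρ ≤ 1 / 2) (hp : p < -1) :
    ∫ r in ρ..(c⁻¹ - ρ), c ^ n * r ^ (n - 1) * (1 - c * r) ^ p
      ≤ (c * ρ) ^ (p + 1) / -(p + 1) := by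
  have hc0 : 0 < c := one_pos.trans_le hc
  have hρle : ρ ≤ c⁻¹ - ρ := by
    rw [le_sub_iff_add_le, ← mul_le_mul_iff_of_pos_left hc0, mul_inv_cancel₀ hc0.ne']
    linarith
  have hpos : ∀ r ∈ Set.Icc ρ (c⁻¹ - ρ), 0 < 1 - c * r := fun r hr => by
    have := mul_le_mul_of_nonneg_left hr.2 hc0.le
    rw [mul_sub, mul_inv_cancel₀ hc0.ne'] at this
    linarith [mul_pos hc0 hρ]
  have hcont : ContinuousOn (fun r => (1 - c * r) ^ p) (Set.Icc ρ (c⁻¹ - ρ)) :=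
    ContinuousOn.rpow_const (by fun_prop) fun r hr => Or.inl (hpos r hr).ne'
  calc ∫ r in ρ..(c⁻¹ - ρ), c ^ n * r ^ (n - 1) * (1 - c * r) ^ p
      ≤ ∫ r in ρ..(c⁻¹ - ρ), c * (1 - c * r) ^ p := by
        refine integral_mono_on hρle ?_ ?_ fun r hr => ?_
        · exact ((continuousOn_const.mul (continuousOn_pow _)).mul hcont).intervalIntegrable_of_Icc
            hρle
        · exact (continuousOn_const.mul hcont).intervalIntegrable_of_Icc hρle
        · have hr0 : 0 ≤ r := hρ.le.trans hr.1
          gcongr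
          · exact rpow_nonneg (hpos r hr).le p
          · exact pow_mul_pow_pred_le n hc hr0 (sub_pos.mp (hpos r hr)).le
    _ = ∫ x in c * ρ..1 - c * ρ, x ^ p := integral_mul_one_sub_mul_rpow hc0.ne' ρ p
    _ ≤ (c * ρ) ^ (p + 1) / -(p + 1) :=
        integral_rpow_le_of_lt_neg_one (by positivity) (by linarith) hp

theorem stmt_8_general (n : ℕ) (a : ℝ) (ha' : a < 1) :
    ∃ C : ℝ, 0 < C ∧ ∀ j : ℕ, 1 ≤ j → ∀ rl : ℝ, 0 < rl →
      (2 : ℝ) ^ j * rl ≤ (2 : ℝ) ^ (-100 : ℤ) →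
      (2 : ℝ) ^ j * rl *
          ∫ r in rl..(((2 : ℝ) ^ j)⁻¹ - rl),
            (2 : ℝ) ^ (n * j) * r ^ (n - 1) * (1 - (2 : ℝ) ^ j * r) ^ (a - 2)
        ≤ C * ((2 : ℝ) ^ j * rl) ^ a := by
  refine ⟨(1 - a)⁻¹, inv_pos.mpr (sub_pos.mpr ha'), fun j _ rl hrl hsmall => ?_⟩
  set c : ℝ := 2 ^ j
  have hc : 1 ≤ c := one_le_pow₀ one_le_two
  have hint := integral_pow_mul_one_sub_mul_rpow_le n hc hrl (hsmall.trans (by norm_num))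
    (p := a - 2) (by linarith)
  rw [show a - 2 + 1 = a - 1 by ring, show -(a - 1) = 1 - a by ring,
    rpow_sub_one (by positivity)] at hint
  rw [pow_mul']
  calc _ ≤ c * rl * ((c * rl) ^ a / (c * rl) / (1 - a)) := by gcongr
    _ = (1 - a)⁻¹ * (c * rl) ^ a := by field_simp

theorem stmt_8 (n : ℕ) (hn : 1 ≤ n) (a : ℝ) (ha : 0 < a) (ha' : a < 1) :
    ∃ C : ℝ, 0 < C ∧ ∀ j : ℕ, 1 ≤ j → ∀ rl : ℝ, 0 < rl →
      (2 : ℝ) ^ j * rl ≤ (2 : ℝ) ^ (-100 : ℤ) →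
      (2 : ℝ) ^ j * rl *
          ∫ r in rl..(((2 : ℝ) ^ j)⁻¹ - rl),
            (2 : ℝ) ^ (n * j) * r ^ (n - 1) * (1 - (2 : ℝ) ^ j * r) ^ (a - 2)
        ≤ C * ((2 : ℝ) ^ j * rl) ^ a :=
  stmt_8_general n a ha'
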